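/- arXiv:2605.08944 — 3 statements merged into one kernel-verified Lean document; each statement's English description precedes it below -/
import Mathlib

section
/- The class MSLC is closed under min-plus convolution. Explicitly, let β₁ = δ_{D₁} ⊗ min_{i=1..n₁} ((δ_{τ_i} ⊗ I_{σ_i} ⊗ γ_{0,ρ_i}) ∧ δ_0) and β₂ = δ_{D₂} ⊗ min_{j=1..n₂} ((δ_{τ̃_j} ⊗ I_{σ̃_j} ⊗ γ_{0,ρ̃_j}) ∧ δ_0) with all τ_i, σ_i, τ̃_j, σ̃_j ≥ 0, D₁, D₂ ≥ 0 and ρ_i, ρ̃_j ∈ [0,+∞]. Then β₁ ⊗ β₂ = δ_{D₁+D₂} ⊗ min_{i=1..n₁} min_{j=1..n₂} [ ((δ_{τ_i} ⊗ I_{σ_i} ⊗ γ_{0,ρ_i}) ∧ δ_0) ∧ ((δ_{τ̃_j} ⊗ I_{σ̃_j} ⊗ γ_{0,ρ̃_j}) ∧ δ_0) ∧ ((δ_{τ_i+τ̃_j} ⊗ I_{σ_i+σ̃_j} ⊗ γ_{0,ρ_i}) ∧ δ_0) ∧ ((δ_{τ_i+τ̃_j} ⊗ I_{σ_i+σ̃_j}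 ⊗ γ_{0,ρ̃_j}) ∧ δ_0) ], and hence β₁ ⊗ β₂ ∈ MSLC. -/
/-!
Min-plus convolution is associative and commutative, distributes over pointwise infima (on
`t ≥ 0`, the only times it reads), and `δ_{D₁} ⊗ δ_{D₂} = δ_{D₁+D₂}`; so the theorem reduces to
convolving two building blocks. For `τ ≥ 0` the block `(δ_τ ⊗ I_σ ⊗ γ_{0,ρ}) ∧ δ_0` is the curve
`t ↦ σ + ρ (t - τ)⁺` on `t > 0`. In the convolution of two such curves the split points `u = 0`
and `u = t` give the two curves themselves, while an interior split pays both bursts and at least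
the smaller of the two rates on `(t - τ - τ')⁺ ≤ (t - u - τ)⁺ + (u - τ')⁺`, which is the minimum of
the last two terms; the split `u = min t τ'` (or its mirror image) attains each of them.
-/

open scoped ENNReal
open Classical

noncomputable section

/-- Burst-delay function `δ_T`: `0` for `t ≤ T`, `+∞` for `t > T`. -/
def bdelay (T : ℝ) : ℝ → ℝ≥0∞ := fun t => if t ≤ T then 0 else ⊤

/-- Window function `I_w`: `w` at `t = 0`, `+∞` for `t > 0` (and `0` for `t < 0`). -/
def wndw (w : ℝ≥0∞) : ℝ → ℝ≥0∞ := fun t => if t < 0 then 0 else if t = 0 then w else ⊤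

/-- Token-bucket curve `γ_{b,r}`: `b + r·t` for `t > 0`, `0` for `t ≤ 0`. -/
def tbkt (b r : ℝ≥0∞) : ℝ → ℝ≥0∞ := fun t => if t ≤ 0 then 0 else b + r * ENNReal.ofReal t

/-- Min-plus convolution `(f ⊗ g)(t) = inf_{0 ≤ u ≤ t} (f(t − u) + g(u))` for `t ≥ 0`,
extended by `0` on negative times. -/
def mconv (f g : ℝ → ℝ≥0∞) : ℝ → ℝ≥0∞ :=
  fun t => if t < 0 then 0 else ⨅ u ∈ Set.Icc (0 : ℝ) t, (f (t - u) + g u)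

/-- The basic MSLC building block `(δ_τ ⊗ I_σ ⊗ γ_{0,ρ}) ∧ δ_0`. -/
def mslcStep (τ : ℝ) (σ ρ : ℝ≥0∞) : ℝ → ℝ≥0∞ :=
  mconv (mconv (bdelay τ) (wndw σ)) (tbkt 0 ρ) ⊓ bdelay 0

/-- Horizontal deviation (delay bound):
`hdev(α, β) = sup_{t ≥ 0} inf { d ≥ 0 : α(t − d) ≤ β(t) }`. -/
def hdev (α β : ℝ → ℝ≥0∞) : ℝ≥0∞ :=
  ⨆ t ∈ Set.Ici (0 : ℝ), ⨅ d ∈ {d : ℝ | 0 ≤ d ∧ α (t - d) ≤ β t}, ENNReal.ofReal d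

/-- Vertical deviation (backlog bound): `vdev(α, β) = sup_{u ≥ 0} (α(u) − β(u))`
with truncated subtraction (so `x − (+∞) = 0`). -/
def vdev (α β : ℝ → ℝ≥0∞) : ℝ≥0∞ :=
  ⨆ u ∈ Set.Ici (0 : ℝ), (α u - β u)

/-- Min-plus deconvolution `(f ⊘ g)(t) = sup_{u ≥ 0} (f(t + u) − g(u))`. -/
def mdeconv (f g : ℝ → ℝ≥0∞) : ℝ → ℝ≥0∞ :=
  fun t => ⨆ u ∈ Set.Ici (0 : ℝ), (f (t + u) - g u)

/-- FIFO leftover `(β ⊖_θ α)(t) = [β(t) − α(t − θ)]⁺` for `t > θ`, `0` for `t ≤ θ`. -/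
def leftover (β α : ℝ → ℝ≥0∞) (θ : ℝ) : ℝ → ℝ≥0∞ :=
  fun t => if t ≤ θ then 0 else β t - α (t - θ)

/-- Nondecreasing lower bound `f↑(t) = inf_{u ≥ t} f(u)`. -/
def ndlb (f : ℝ → ℝ≥0∞) : ℝ → ℝ≥0∞ := fun t => ⨅ u ∈ Set.Ici t, f u

open Set

section MinPlus

variable {f g : ℝ → ℝ≥0∞} {t u : ℝ}

lemma mconv_of_neg (ht : t < 0) : mconv f g t = 0 := if_pos ht

lemma mconv_of_nonneg (ht : 0 ≤ t) :
    mconv f g t = ⨅ u ∈ Icc (0 : ℝ) t, (f (t - u) + g u) :=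
  if_neg (not_lt.mpr ht)

lemma mconv_le_add (hu : u ∈ Icc (0 : ℝ) t) : mconv f g t ≤ f (t - u) + g u := by
  rw [mconv_of_nonneg (hu.1.trans hu.2)]
  exact iInf₂_le u hu

lemma le_mconv {x : ℝ≥0∞} (ht : 0 ≤ t) (h : ∀ u ∈ Icc (0 : ℝ) t, x ≤ f (t - u) + g u) :
    x ≤ mconv f g t := by
  rw [mconv_of_nonneg ht]
  exact le_iInf₂ h

lemma le_add_mconv {a x : ℝ≥0∞} (hu : 0 ≤ u)
    (h : ∀ v ∈ Icc (0 : ℝ) u, x ≤ a + (f (u - v) + g v)) : x ≤ a + mconv f g u := by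
  rw [mconv_of_nonneg hu, ENNReal.add_iInf]
  exact le_iInf fun v => by rw [ENNReal.add_iInf]; exact le_iInf (h v)

lemma mconv_le_of_apply_zero (ht : 0 ≤ t) (hg : g 0 = 0) : mconv f g t ≤ f t := by
  simpa [hg] using mconv_le_add (f := f) (g := g) ⟨le_rfl, ht⟩

lemma mconv_comm (f g : ℝ → ℝ≥0∞) : mconv f g = mconv g f := by
  suffices h : ∀ f g : ℝ → ℝ≥0∞, ∀ t, mconv f g t ≤ mconv g f t from
    funext fun t => (h f g t).antisymm (h g f t)
  intro f g t
  rcases lt_or_ge t 0 with ht | ht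
  · simp [mconv_of_neg ht]
  refine le_mconv ht fun u hu => ?_
  calc mconv f g t ≤ f (t - (t - u)) + g (t - u) :=
        mconv_le_add ⟨by linarith [hu.2], by linarith [hu.1]⟩
    _ = g (t - u) + f u := by rw [sub_sub_cancel, add_comm]

lemma mconv_assoc (f g h : ℝ → ℝ≥0∞) : mconv (mconv f g) h = mconv f (mconv g h) := by
  funext t
  rcases lt_or_ge t 0 with ht | ht
  · rw [mconv_of_neg ht, mconv_of_neg ht]
  apply le_antisymm
  · refine le_mconv ht fun u hu => le_add_mconv hu.1 fun v hv => ?_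
    calc mconv (mconv f g) h t ≤ mconv f g (t - v) + h v := mconv_le_add ⟨hv.1, hv.2.trans hu.2⟩
      _ ≤ f (t - v - (u - v)) + g (u - v) + h v := by
          gcongr
          exact mconv_le_add ⟨by linarith [hv.2], by linarith [hu.2]⟩
      _ = f (t - u) + (g (u - v) + h v) := by rw [sub_sub_sub_cancel_right, add_assoc]
  · refine le_mconv ht fun u hu => ?_
    rw [add_comm]
    refine le_add_mconv (by linarith [hu.2]) fun v hv => ?_
    calc mconv f (mconv g h) t ≤ f (t - (u + v)) + mconv g h (u + v) :=
          mconv_le_add ⟨by linarith [hu.1, hv.1], by linarith [hv.2]⟩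
      _ ≤ f (t - (u + v)) + (g (u + v - u) + h u) := by
          gcongr
          exact mconv_le_add ⟨hu.1, le_add_of_nonneg_right hv.1⟩
      _ = h u + (f (t - u - v) + g v) := by
          rw [add_sub_cancel_left, sub_sub, add_comm (h u), add_assoc]

lemma mconv_mconv_mconv_comm (f g f' g' : ℝ → ℝ≥0∞) :
    mconv (mconv f g) (mconv f' g') = mconv (mconv f f') (mconv g g') := by
  rw [mconv_assoc, ← mconv_assoc g, mconv_comm g f', mconv_assoc f', ← mconv_assoc]

lemma mconv_congr_right {g g' : ℝ → ℝ≥0∞} (h : EqOn g g' (Ici 0)) :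
    mconv f g = mconv f g' := by
  funext t
  rcases lt_or_ge t 0 with ht | ht
  · rw [mconv_of_neg ht, mconv_of_neg ht]
  simp only [mconv_of_nonneg ht]
  exact iInf_congr fun u => iInf_congr fun hu => by rw [h hu.1]

lemma mconv_iInf_apply {ι : Sort*} (f : ℝ → ℝ≥0∞) (g : ι → ℝ → ℝ≥0∞) (ht : 0 ≤ t) :
    mconv f (⨅ i, g i) t = ⨅ i, mconv f (g i) t := by
  simp only [mconv_of_nonneg ht, iInf_apply, ENNReal.add_iInf]
  rw [iInf_comm]
  exact iInf_congr fun u => iInf_comm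


lemma iInf_mconv_apply {ι : Sort*} (f : ι → ℝ → ℝ≥0∞) (g : ℝ → ℝ≥0∞) (ht : 0 ≤ t) :
    mconv (⨅ i, f i) g t = ⨅ i, mconv (f i) g t := by
  simp only [mconv_comm _ g, mconv_iInf_apply g f ht]

end MinPlus

section Curves

variable {T t : ℝ}

lemma bdelay_of_le (h : t ≤ T) : bdelay T t = 0 := if_pos h

lemma bdelay_of_lt (h : T < t) : bdelay T t = ⊤ := if_neg (not_le.mpr h)

lemma tbkt_zero (ρ : ℝ≥0∞) : tbkt 0 ρ = fun t => ρ * ENNReal.ofReal t := by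
  funext t
  unfold tbkt
  split_ifs with ht
  · rw [ENNReal.ofReal_of_nonpos ht, mul_zero]
  · rw [zero_add]

lemma mconv_bdelay_bdelay {a b : ℝ} (ha : 0 ≤ a) (hb : 0 ≤ b) :
    mconv (bdelay a) (bdelay b) = bdelay (a + b) := by
  funext t
  rcases lt_or_ge t 0 with ht | ht
  · rw [mconv_of_neg ht, bdelay_of_le (by linarith)]
  rcases le_or_gt t (a + b) with hab | hab
  · rw [bdelay_of_le hab, ← nonpos_iff_eq_zero]
    calc mconv (bdelay a) (bdelay b) t ≤ bdelay a (t - min t b) + bdelay b (min t b) :=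
          mconv_le_add ⟨le_min ht hb, min_le_left t b⟩
      _ = 0 := by
          rw [bdelay_of_le (min_le_right t b), bdelay_of_le, add_zero]
          rcases min_cases t b with ⟨h, -⟩ | ⟨h, -⟩ <;> rw [h] <;> linarith
  · rw [bdelay_of_lt hab, top_le_iff.symm]
    refine le_mconv ht fun u hu => ?_
    rcases le_or_gt u b with h | h
    · rw [bdelay_of_lt (by linarith : a < t - u), top_add]
    · rw [bdelay_of_lt h, add_top]

lemma mconv_bdelay_wndw_of_nonneg (τ : ℝ) (σ : ℝ≥0∞) (ht : 0 ≤ t) :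
    mconv (bdelay τ) (wndw σ) t = bdelay τ t + σ := by
  apply le_antisymm
  · simpa [wndw] using mconv_le_add (f := bdelay τ) (g := wndw σ) ⟨le_rfl, ht⟩
  · refine le_mconv ht fun u hu => ?_
    rcases hu.1.eq_or_lt with rfl | hu0
    · simp [wndw]
    · simp [wndw, not_lt.mpr hu0.le, hu0.ne']

end Curves

def burstRateLatency (τ : ℝ) (σ ρ : ℝ≥0∞) : ℝ → ℝ≥0∞ :=
  fun t => if t ≤ 0 then 0 else σ + ρ * ENNReal.ofReal (t - τ)

section BurstRateLatency

variable {τ τ' t : ℝ} {σ σ' ρ ρ' : ℝ≥0∞}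

lemma burstRateLatency_of_nonpos (ht : t ≤ 0) : burstRateLatency τ σ ρ t = 0 := if_pos ht

lemma burstRateLatency_of_pos (ht : 0 < t) :
    burstRateLatency τ σ ρ t = σ + ρ * ENNReal.ofReal (t - τ) := if_neg (not_le.mpr ht)

lemma burstRateLatency_le (t : ℝ) : burstRateLatency τ σ ρ t ≤ σ + ρ * ENNReal.ofReal (t - τ) := by
  rcases le_or_gt t 0 with ht | ht
  · rw [burstRateLatency_of_nonpos ht]
    exact zero_le
  · rw [burstRateLatency_of_pos ht]

lemma mslcStep_eq_burstRateLatency (hτ : 0 ≤ τ) (σ ρ : ℝ≥0∞) :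
    mslcStep τ σ ρ = burstRateLatency τ σ ρ := by
  funext t
  rw [mslcStep, Pi.inf_apply, tbkt_zero]
  rcases le_or_gt t 0 with ht | ht
  · rw [burstRateLatency_of_nonpos ht, bdelay_of_le ht]
    exact min_eq_right zero_le
  rw [burstRateLatency_of_pos ht, bdelay_of_lt ht, inf_top_eq]
  apply le_antisymm
  · have hu : max (t - τ) 0 ∈ Icc 0 t := ⟨le_max_right _ _, max_le (by linarith) ht.le⟩
    refine (mconv_le_add hu).trans_eq ?_
    rw [mconv_bdelay_wndw_of_nonneg τ σ (by linarith [hu.2]),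
      bdelay_of_le (by linarith [le_max_left (t - τ) 0]), zero_add, ENNReal.ofReal_max,
      ENNReal.ofReal_zero, max_eq_left zero_le]
  · refine le_mconv ht.le fun u hu => ?_
    rw [mconv_bdelay_wndw_of_nonneg τ σ (by linarith [hu.2])]
    rcases le_or_gt (t - u) τ with h | h
    · rw [bdelay_of_le h, zero_add]
      gcongr
      linarith
    · rw [bdelay_of_lt h, top_add, top_add]
      exact le_top

lemma mconv_burstRateLatency_le (hτ : 0 ≤ τ) (hτ' : 0 ≤ τ') (ht : 0 ≤ t) :
    mconv (burstRateLatency τ σ ρ) (burstRateLatency τ' σ' ρ') t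
      ≤ σ + σ' + ρ * ENNReal.ofReal (t - (τ + τ')) := by
  have hu : min t τ' ∈ Icc 0 t := ⟨le_min ht hτ', min_le_left t τ'⟩
  have hleft : burstRateLatency τ σ ρ (t - min t τ') ≤ σ + ρ * ENNReal.ofReal (t - (τ + τ')) := by
    refine (burstRateLatency_le _).trans ?_
    gcongr σ + ρ * ?_
    rw [ENNReal.ofReal_le_ofReal_iff']
    rcases min_cases t τ' with ⟨h, -⟩ | ⟨h, -⟩ <;> rw [h]
    · right; linarith
    · left; linarith
  have hright : burstRateLatency τ' σ' ρ' (min t τ') ≤ σ' := by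
    refine (burstRateLatency_le _).trans_eq ?_
    rw [ENNReal.ofReal_of_nonpos (by linarith [min_le_right t τ']), mul_zero, add_zero]
  calc mconv (burstRateLatency τ σ ρ) (burstRateLatency τ' σ' ρ') t
      ≤ (σ + ρ * ENNReal.ofReal (t - (τ + τ'))) + σ' :=
        (mconv_le_add hu).trans (add_le_add hleft hright)
    _ = σ + σ' + ρ * ENNReal.ofReal (t - (τ + τ')) := add_right_comm _ _ _

lemma add_mul_inf_add_mul_le (x a b c : ℝ≥0∞) (hc : c ≤ a + b) :
    (x + ρ * c) ⊓ (x + ρ' * c) ≤ x + (ρ * a + ρ' * b) := by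
  rcases le_total ρ ρ' with h | h
  · refine inf_le_left.trans ?_
    calc x + ρ * c ≤ x + (ρ * a + ρ * b) := by rw [← mul_add]; gcongr
      _ ≤ x + (ρ * a + ρ' * b) := by gcongr
  · refine inf_le_right.trans ?_
    calc x + ρ' * c ≤ x + (ρ' * a + ρ' * b) := by rw [← mul_add]; gcongr
      _ ≤ x + (ρ * a + ρ' * b) := by gcongr

lemma burstRateLatency_mconv (hτ : 0 ≤ τ) (hτ' : 0 ≤ τ') :
    mconv (burstRateLatency τ σ ρ) (burstRateLatency τ' σ' ρ') =
      burstRateLatency τ σ ρ ⊓ burstRateLatency τ' σ' ρ'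
        ⊓ burstRateLatency (τ + τ') (σ + σ') ρ ⊓ burstRateLatency (τ + τ') (σ + σ') ρ' := by
  have h0 : ∀ {τ σ ρ}, burstRateLatency τ σ ρ 0 = 0 := burstRateLatency_of_nonpos le_rfl
  funext t
  simp only [Pi.inf_apply]
  rcases le_or_gt t 0 with ht | ht
  · simp only [burstRateLatency_of_nonpos ht, inf_idem, ← nonpos_iff_eq_zero]
    rcases ht.lt_or_eq with ht | rfl
    · rw [mconv_of_neg ht]
    · exact (mconv_le_of_apply_zero le_rfl h0).trans_eq h0
  apply le_antisymm
  · refine le_inf (le_inf (le_inf ?_ ?_) ?_) ?_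
    · exact mconv_le_of_apply_zero ht.le h0
    · rw [mconv_comm]
      exact mconv_le_of_apply_zero ht.le h0
    · rw [burstRateLatency_of_pos ht]
      exact mconv_burstRateLatency_le hτ hτ' ht.le
    · rw [burstRateLatency_of_pos ht, mconv_comm, add_comm τ, add_comm σ]
      exact mconv_burstRateLatency_le hτ' hτ ht.le
  · refine le_mconv ht.le fun u hu => ?_
    rcases hu.1.eq_or_lt with rfl | hu0
    · rw [sub_zero, h0, add_zero]
      exact inf_le_left.trans (inf_le_left.trans inf_le_left)
    rcases hu.2.eq_or_lt with rfl | hut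
    · rw [sub_self, h0, zero_add]
      exact inf_le_left.trans (inf_le_left.trans inf_le_right)
    refine (inf_le_inf_right _ inf_le_right).trans ?_
    rw [burstRateLatency_of_pos ht, burstRateLatency_of_pos ht,
      burstRateLatency_of_pos (sub_pos.mpr hut), burstRateLatency_of_pos hu0,
      add_add_add_comm]
    refine add_mul_inf_add_mul_le _ _ _ _ ?_
    rw [show t - (τ + τ') = (t - u - τ) + (u - τ') by ring]
    exact ENNReal.ofReal_add_le

end BurstRateLatency

theorem stmt3_general (n1 n2 : ℕ)
    (D1 D2 : ℝ) (hD1 : 0 ≤ D1) (hD2 : 0 ≤ D2)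
    (tau sig : Fin n1 → ℝ) (rho : Fin n1 → ℝ≥0∞)
    (tau' sig' : Fin n2 → ℝ) (rho' : Fin n2 → ℝ≥0∞)
    (htau : ∀ i, 0 ≤ tau i)
    (htau' : ∀ j, 0 ≤ tau' j) :
    mconv (mconv (bdelay D1) (⨅ i, mslcStep (tau i) (ENNReal.ofReal (sig i)) (rho i)))
          (mconv (bdelay D2) (⨅ j, mslcStep (tau' j) (ENNReal.ofReal (sig' j)) (rho' j)))
      = mconv (bdelay (D1 + D2))
          (⨅ i, ⨅ j,
            mslcStep (tau i) (ENNReal.ofReal (sig i)) (rho i)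
              ⊓ mslcStep (tau' j) (ENNReal.ofReal (sig' j)) (rho' j)
              ⊓ mslcStep (tau i + tau' j)
                  (ENNReal.ofReal (sig i) + ENNReal.ofReal (sig' j)) (rho i)
              ⊓ mslcStep (tau i + tau' j)
                  (ENNReal.ofReal (sig i) + ENNReal.ofReal (sig' j)) (rho' j)) := by
  rw [mconv_mconv_mconv_comm, mconv_bdelay_bdelay hD1 hD2]
  refine mconv_congr_right fun t ht => ?_
  simp only [iInf_mconv_apply _ _ ht, mconv_iInf_apply _ _ ht, iInf_apply]
  refine iInf_congr fun i => iInf_congr fun j => ?_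
  have hsum := add_nonneg (htau i) (htau' j)
  rw [mslcStep_eq_burstRateLatency (htau i), mslcStep_eq_burstRateLatency (htau' j),
    mslcStep_eq_burstRateLatency hsum, mslcStep_eq_burstRateLatency hsum,
    burstRateLatency_mconv (htau i) (htau' j)]

/-- the class MSLC is closed under min-plus convolution (explicit formula). -/
theorem stmt3 (n1 n2 : ℕ) (hn1 : 0 < n1) (hn2 : 0 < n2)
    (D1 D2 : ℝ) (hD1 : 0 ≤ D1) (hD2 : 0 ≤ D2)
    (tau sig : Fin n1 → ℝ) (rho : Fin n1 → ℝ≥0∞)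
    (tau' sig' : Fin n2 → ℝ) (rho' : Fin n2 → ℝ≥0∞)
    (htau : ∀ i, 0 ≤ tau i) (hsig : ∀ i, 0 ≤ sig i)
    (htau' : ∀ j, 0 ≤ tau' j) (hsig' : ∀ j, 0 ≤ sig' j) :
    mconv (mconv (bdelay D1) (⨅ i, mslcStep (tau i) (ENNReal.ofReal (sig i)) (rho i)))
          (mconv (bdelay D2) (⨅ j, mslcStep (tau' j) (ENNReal.ofReal (sig' j)) (rho' j)))
      = mconv (bdelay (D1 + D2))
          (⨅ i, ⨅ j,
            mslcStep (tau i) (ENNReal.ofReal (sig i)) (rho i)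
              ⊓ mslcStep (tau' j) (ENNReal.ofReal (sig' j)) (rho' j)
              ⊓ mslcStep (tau i + tau' j)
                  (ENNReal.ofReal (sig i) + ENNReal.ofReal (sig' j)) (rho i)
              ⊓ mslcStep (tau i + tau' j)
                  (ENNReal.ofReal (sig i) + ENNReal.ofReal (sig' j)) (rho' j)) :=
  stmt3_general n1 n2 D1 D2 hD1 hD2 tau sig rho tau' sig' rho' htau htau'
end
end

section
/- Let 0 ≤ L ≤ b, 0 < r < R' < ∞, τ₁ ≥ 0, σ₁ ≥ 0 and r ≤ ρ₁ ≤ R' with ρ₁ < ∞. Let α = γ_{b,r} ∧ γ_{L,R'} and β = (δ_{τ₁} ⊗ I_{σ₁} ⊗ γ_{0,ρ₁}) ∧ δ_0, and write Y = ((b−L)/(R'−r))·r + b. Then hdev(α, β) = max( 0, τ₁·1{σ₁ ≥ Y} − [σ₁ − b]⁺/r, τ₁·1{Y ≥ σ₁} + [Y − σ₁]⁺/ρ₁ − (b−L)/(R'−r) ), where [x]⁺ = max(x, 0) and 1{C} is 1 if condition C holds and 0 otherwise. -/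
/-! On `(0, ∞)` the arrival curve `α = γ_{b,r} ∧ γ_{L,R'}` is concave and piecewise linear with its
kink at `(s₀, Y)`, `s₀ = (b - L)/(R' - r)`, so `α s ≤ x` iff `s ≤ shapedInv x` for an explicit
pseudo-inverse, and the delay at time `t > 0` is `t - shapedInv (β t)`. Comparing slopes
(`r ≤ ρ ≤ R'`) bounds this delay at every `t` both by `τ - (σ - b)/r` and by
`τ + (Y - σ)/ρ - s₀`. The first bound is attained at `t = τ` when `σ ≥ Y`, the second at the time
`β` reaches `Y` when `σ < Y`, so `hdev` is the minimum of the two; the indicator formula of the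
statement is a case-by-case rewriting of that minimum. -/

open scoped ENNReal
open Classical

noncomputable section

lemma tbkt_zero_apply (ρ : ℝ≥0∞) (u : ℝ) : tbkt 0 ρ u = ρ * ENNReal.ofReal u := by
  unfold tbkt
  split_ifs with hu
  · simp [ENNReal.ofReal_of_nonpos hu]
  · rw [zero_add]

lemma mconv_bdelay_wndw_apply (τ : ℝ) (σ : ℝ≥0∞) {t : ℝ} (ht : 0 ≤ t) :
    mconv (bdelay τ) (wndw σ) t = bdelay τ t + σ := by
  rw [mconv, if_neg ht.not_gt]
  refine le_antisymm ((iInf₂_le 0 ⟨le_rfl, ht⟩).trans (by simp [wndw])) (le_iInf₂ fun u hu => ?_)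
  rcases hu.1.eq_or_lt with rfl | hu0
  · simp [wndw]
  · simp [wndw, hu0.not_gt, hu0.ne']

lemma mconv_bdelay_wndw_tbkt_apply {τ : ℝ} (hτ : 0 ≤ τ) (σ ρ : ℝ≥0∞) {t : ℝ} (ht : 0 ≤ t) :
    mconv (mconv (bdelay τ) (wndw σ)) (tbkt 0 ρ) t = σ + ρ * ENNReal.ofReal (t - τ) := by
  rw [mconv, if_neg ht.not_gt]
  apply le_antisymm
  · have hu : max (t - τ) 0 ∈ Set.Icc 0 t := ⟨le_max_right _ _, max_le (by linarith) ht⟩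
    refine (iInf₂_le _ hu).trans_eq ?_
    rw [mconv_bdelay_wndw_apply _ _ (sub_nonneg.2 hu.2), tbkt_zero_apply,
      bdelay, if_pos (by linarith [le_max_left (t - τ) 0]), zero_add, ENNReal.ofReal_max]
    simp
  · refine le_iInf₂ fun u hu => ?_
    rw [mconv_bdelay_wndw_apply _ _ (sub_nonneg.2 hu.2), tbkt_zero_apply, bdelay]
    split_ifs with hτu
    · rw [zero_add]
      gcongr
      linarith
    · simp

lemma mslcStep_ofReal_apply {τ σ ρ t : ℝ} (hτ : 0 ≤ τ) (hσ : 0 ≤ σ) (hρ : 0 ≤ ρ) (ht : 0 < t) :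
    mslcStep τ (ENNReal.ofReal σ) (ENNReal.ofReal ρ) t
      = ENNReal.ofReal (σ + ρ * max (t - τ) 0) := by
  rw [mslcStep, Pi.inf_apply, mconv_bdelay_wndw_tbkt_apply hτ _ _ ht.le, bdelay,
    if_neg ht.not_ge, inf_top_eq, ENNReal.ofReal_add hσ (by positivity),
    ENNReal.ofReal_mul hρ, ENNReal.ofReal_max]
  simp

lemma tbkt_ofReal_le_ofReal_iff {b r v : ℝ} (hb : 0 ≤ b) (hr : 0 < r) (hv : 0 ≤ v) (s : ℝ) :
    tbkt (ENNReal.ofReal b) (ENNReal.ofReal r) s ≤ ENNReal.ofReal v ↔ s ≤ max 0 ((v - b) / r) := by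
  unfold tbkt
  split_ifs with hs
  · simp [hs]
  · rw [not_le] at hs
    rw [← ENNReal.ofReal_mul hr.le, ← ENNReal.ofReal_add hb (by positivity),
      ENNReal.ofReal_le_ofReal_iff hv, le_max_iff, or_iff_right hs.not_ge, le_div_iff₀ hr]
    constructor <;> intro h <;> linarith

/-- `shapedInv b r L R' x = sup {s | (γ_{b,r} ∧ γ_{L,R'}) s ≤ x}`, see `shaped_le_ofReal_iff`. -/
def shapedInv (b r L R' x : ℝ) : ℝ := max 0 (max ((x - b) / r) ((x - L) / R'))

lemma shaped_le_ofReal_iff {b r L R' v : ℝ} (hb : 0 ≤ b) (hr : 0 < r) (hL : 0 ≤ L) (hR' : 0 < R')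
    (hv : 0 ≤ v) (s : ℝ) :
    (tbkt (ENNReal.ofReal b) (ENNReal.ofReal r) ⊓ tbkt (ENNReal.ofReal L) (ENNReal.ofReal R')) s
      ≤ ENNReal.ofReal v ↔ s ≤ shapedInv b r L R' v := by
  rw [Pi.inf_apply, inf_le_iff, tbkt_ofReal_le_ofReal_iff hb hr hv,
    tbkt_ofReal_le_ofReal_iff hL hR' hv, shapedInv]
  simp only [le_max_iff]
  tauto

lemma iInf_ofReal_of_le_iff {P : ℝ → Prop} {c : ℝ} (hP : ∀ d, 0 ≤ d → (P d ↔ c ≤ d)) :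
    ⨅ d ∈ {d : ℝ | 0 ≤ d ∧ P d}, ENNReal.ofReal d = ENNReal.ofReal c := by
  apply le_antisymm
  · have hmem : max c 0 ∈ {d : ℝ | 0 ≤ d ∧ P d} :=
      ⟨le_max_right _ _, (hP _ (le_max_right _ _)).2 (le_max_left _ _)⟩
    refine (iInf₂_le _ hmem).trans ?_
    rw [ENNReal.ofReal_max]
    simp
  · exact le_iInf₂ fun d hd => ENNReal.ofReal_le_ofReal ((hP d hd.1).1 hd.2)

lemma hdev_eq_iSup_of_le_ofReal_iff {α β : ℝ → ℝ≥0∞} {S v : ℝ → ℝ} (hα0 : α 0 ≤ β 0)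
    (hα : ∀ x, 0 ≤ x → ∀ s, α s ≤ ENNReal.ofReal x ↔ s ≤ S x)
    (hβ : ∀ t, 0 < t → β t = ENNReal.ofReal (v t)) (hv : ∀ t, 0 < t → 0 ≤ v t) :
    hdev α β = ⨆ t ∈ Set.Ioi (0 : ℝ), ENNReal.ofReal (t - S (v t)) := by
  have hdelay : ∀ t, 0 < t → ⨅ d ∈ {d : ℝ | 0 ≤ d ∧ α (t - d) ≤ β t}, ENNReal.ofReal d
      = ENNReal.ofReal (t - S (v t)) := fun t ht =>
    iInf_ofReal_of_le_iff fun d _ => by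
      rw [hβ t ht, hα _ (hv t ht)]
      constructor <;> intro h <;> linarith
  apply le_antisymm
  · refine iSup₂_le fun t ht => ?_
    rcases (Set.mem_Ici.1 ht).eq_or_lt with rfl | ht
    · exact (iInf₂_le 0 ⟨le_rfl, by simpa using hα0⟩).trans (by simp)
    · exact (hdelay t ht).trans_le (le_iSup₂_of_le t ht le_rfl)
  · exact iSup₂_le fun t ht =>
      (hdelay t ht).symm.trans_le (le_iSup₂_of_le t (Set.mem_Ici.2 (le_of_lt ht)) le_rfl)

lemma iSup_Ioi_ofReal_eq {g : ℝ → ℝ} {c : ℝ} (hle : ∀ t, 0 < t → g t ≤ c)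
    (hge : c ≤ 0 ∨ ∃ t, 0 < t ∧ c ≤ g t) :
    ⨆ t ∈ Set.Ioi (0 : ℝ), ENNReal.ofReal (g t) = ENNReal.ofReal c := by
  refine le_antisymm (iSup₂_le fun t ht => ENNReal.ofReal_le_ofReal (hle t ht)) ?_
  rcases hge with hc | ⟨t, ht, hc⟩
  · simp [ENNReal.ofReal_of_nonpos hc]
  · exact le_iSup₂_of_le t ht (ENNReal.ofReal_le_ofReal hc)

section Delay

variable {b r L R' s₀ σ ρ τ : ℝ}

lemma shapedInv_eq_of_le (hr : 0 < r) (hrR : r ≤ R') (hs₀ : 0 ≤ s₀)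
    (hkink : s₀ * r + b = s₀ * R' + L) {x : ℝ} (hx : s₀ * r + b ≤ x) :
    shapedInv b r L R' x = (x - b) / r := by
  have hR' : 0 < R' := hr.trans_le hrR
  have hs₀x : s₀ ≤ (x - b) / r := by rw [le_div_iff₀ hr]; linarith
  have hLb : (x - L) / R' ≤ (x - b) / r := by
    rw [div_le_div_iff₀ hR' hr]
    nlinarith [mul_nonneg (sub_nonneg.2 hx) (sub_nonneg.2 hrR)]
  rw [shapedInv, max_eq_left hLb, max_eq_right (hs₀.trans hs₀x)]

lemma sub_shapedInv_le_delay_at_tau (hr : 0 < r) (hrρ : r ≤ ρ) (t : ℝ) :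
    t - shapedInv b r L R' (σ + ρ * max (t - τ) 0) ≤ τ - (σ - b) / r := by
  have hS : (σ + ρ * max (t - τ) 0 - b) / r ≤ shapedInv b r L R' (σ + ρ * max (t - τ) 0) :=
    le_max_of_le_right (le_max_left _ _)
  have hm : t - τ ≤ max (t - τ) 0 := le_max_left _ _
  have hm0 : 0 ≤ max (t - τ) 0 := le_max_right _ _
  have hrate : (σ - b) / r + max (t - τ) 0 ≤ (σ + ρ * max (t - τ) 0 - b) / r := by
    rw [le_div_iff₀ hr, add_mul, div_mul_cancel₀ _ hr.ne']
    nlinarith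
  linarith

lemma sub_shapedInv_le_delay_at_kink (hr : 0 < r) (hrρ : r ≤ ρ) (hρR : ρ ≤ R')
    (hkink : s₀ * r + b = s₀ * R' + L) (t : ℝ) :
    t - shapedInv b r L R' (σ + ρ * max (t - τ) 0) ≤ τ + (s₀ * r + b - σ) / ρ - s₀ := by
  have hρ : 0 < ρ := hr.trans_le hrρ
  have hR' : 0 < R' := hρ.trans_le hρR
  set m := max (t - τ) 0
  set q := (s₀ * r + b - σ) / ρ
  have hq : q * ρ = s₀ * r + b - σ := div_mul_cancel₀ _ hρ.ne'
  have hm : t - τ ≤ m := le_max_left _ _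
  suffices s₀ + m - q ≤ shapedInv b r L R' (σ + ρ * m) by linarith
  rcases le_total m q with hmq | hqm
  · refine le_trans ?_ (le_max_of_le_right (le_max_right _ _))
    rw [le_div_iff₀ hR']
    nlinarith [mul_nonneg (sub_nonneg.2 hmq) (sub_nonneg.2 hρR)]
  · refine le_trans ?_ (le_max_of_le_right (le_max_left _ _))
    rw [le_div_iff₀ hr]
    nlinarith [mul_nonneg (sub_nonneg.2 hqm) (sub_nonneg.2 hrρ)]

lemma max_zero_min_delay_eq (hr : 0 < r) (hrρ : r ≤ ρ) (hs₀ : 0 ≤ s₀) :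
    max 0 (min (τ - (σ - b) / r) (τ + (s₀ * r + b - σ) / ρ - s₀))
      = max 0 (max (τ * (if s₀ * r + b ≤ σ then 1 else 0) - max (σ - b) 0 / r)
          (τ * (if σ ≤ s₀ * r + b then 1 else 0) + max (s₀ * r + b - σ) 0 / ρ - s₀)) := by
  have hρ : 0 < ρ := hr.trans_le hrρ
  have hdiv : (σ - b) / r = s₀ - (s₀ * r + b - σ) / r := by field_simp; ring
  rcases lt_trichotomy σ (s₀ * r + b) with hσ | rfl | hσ
  · have hrates := div_le_div_of_nonneg_left (sub_nonneg.2 hσ.le) hr hrρ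
    have hA : 0 ≤ max (σ - b) 0 / r := div_nonneg (le_max_right _ _) hr.le
    rw [if_neg hσ.not_ge, if_pos hσ.le, max_eq_left (sub_nonneg.2 hσ.le),
      min_eq_right (by linarith), mul_zero, mul_one, zero_sub, max_left_comm,
      max_eq_right ((neg_nonpos.2 hA).trans (le_max_left _ _))]
  · have hs₀r : 0 ≤ s₀ * r := by positivity
    simp [max_eq_left hs₀r, mul_div_cancel_right₀ _ hr.ne']
  · have hrates := div_le_div_of_nonneg_left (sub_nonneg.2 hσ.le) hr hrρ
    have hneg : ∀ c, (s₀ * r + b - σ) / c = -((σ - (s₀ * r + b)) / c) := fun c => by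
      rw [← neg_div, neg_sub]
    have hb : 0 ≤ σ - b := by nlinarith
    rw [if_pos hσ.le, if_neg hσ.not_ge, max_eq_left hb, max_eq_right (sub_nonpos.2 hσ.le),
      min_eq_left (by linarith [hneg r, hneg ρ]), mul_one, mul_zero, zero_div, zero_add, zero_sub,
      max_comm _ (-s₀), ← max_assoc, max_eq_left (neg_nonpos.2 hs₀)]

lemma iSup_sub_shapedInv_eq_min (hr : 0 < r) (hrρ : r ≤ ρ) (hρR : ρ ≤ R') (hs₀ : 0 ≤ s₀)
    (hkink : s₀ * r + b = s₀ * R' + L) (hτ : 0 ≤ τ) :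
    ⨆ t ∈ Set.Ioi (0 : ℝ), ENNReal.ofReal (t - shapedInv b r L R' (σ + ρ * max (t - τ) 0))
      = ENNReal.ofReal (min (τ - (σ - b) / r) (τ + (s₀ * r + b - σ) / ρ - s₀)) := by
  refine iSup_Ioi_ofReal_eq (fun t _ => le_min (sub_shapedInv_le_delay_at_tau hr hrρ t)
    (sub_shapedInv_le_delay_at_kink hr hrρ hρR hkink t)) ?_
  rcases le_or_gt (s₀ * r + b) σ with hσ | hσ
  · rcases le_or_gt τ 0 with hτ0 | hτ0
    · have hb : 0 ≤ (σ - b) / r := div_nonneg (by nlinarith) hr.le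
      exact Or.inl ((min_le_left _ _).trans (by linarith))
    · refine Or.inr ⟨τ, hτ0, ?_⟩
      rw [sub_self, max_self, mul_zero, add_zero,
        shapedInv_eq_of_le hr (hrρ.trans hρR) hs₀ hkink hσ]
      exact min_le_left _ _
  · have hρ : 0 < ρ := hr.trans_le hrρ
    have hq : 0 < (s₀ * r + b - σ) / ρ := div_pos (sub_pos.2 hσ) hρ
    refine Or.inr ⟨τ + (s₀ * r + b - σ) / ρ, by linarith, ?_⟩
    have hv : σ + ρ * max (τ + (s₀ * r + b - σ) / ρ - τ) 0 = s₀ * r + b := by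
      rw [add_sub_cancel_left, max_eq_left hq.le, mul_div_cancel₀ _ hρ.ne']
      ring
    rw [hv, shapedInv_eq_of_le hr (hrρ.trans hρR) hs₀ hkink le_rfl, add_sub_cancel_right,
      mul_div_cancel_right₀ _ hr.ne']
    exact min_le_right _ _

end Delay

/-- delay bound for a shaped arrival curve `γ_{b,r} ∧ γ_{L,R'}` and a
single-step MSLC service curve with finite rate `ρ₁`. -/
theorem stmt6 (L b r R' tau1 sig1 rho1 : ℝ)
    (hL : 0 ≤ L) (hLb : L ≤ b) (hr : 0 < r) (hrR : r < R')
    (htau : 0 ≤ tau1) (hsig : 0 ≤ sig1) (hrrho : r ≤ rho1) (hrhoR : rho1 ≤ R') :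
    hdev (tbkt (ENNReal.ofReal b) (ENNReal.ofReal r)
            ⊓ tbkt (ENNReal.ofReal L) (ENNReal.ofReal R'))
         (mslcStep tau1 (ENNReal.ofReal sig1) (ENNReal.ofReal rho1))
      = ENNReal.ofReal
          (max 0 (max
            (tau1 * (if (b - L) / (R' - r) * r + b ≤ sig1 then 1 else 0)
              - max (sig1 - b) 0 / r)
            (tau1 * (if sig1 ≤ (b - L) / (R' - r) * r + b then 1 else 0)
              + max ((b - L) / (R' - r) * r + b - sig1) 0 / rho1
              - (b - L) / (R' - r)))) := by
  have hb : 0 ≤ b := hL.trans hLb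
  have hR' : 0 < R' := hr.trans hrR
  set s₀ := (b - L) / (R' - r) with hs₀_def
  have hs₀ : 0 ≤ s₀ := div_nonneg (sub_nonneg.2 hLb) (sub_nonneg.2 hrR.le)
  have hkink : s₀ * r + b = s₀ * R' + L := by
    rw [hs₀_def]
    field_simp [(sub_pos.2 hrR).ne']
    ring
  have hρ : 0 ≤ rho1 := hr.le.trans hrrho
  rw [hdev_eq_iSup_of_le_ofReal_iff (by simp [tbkt])
      (fun x hx => shaped_le_ofReal_iff hb hr hL hR' hx)
      (fun t ht => mslcStep_ofReal_apply htau hsig hρ ht)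
      (fun t _ => add_nonneg hsig (mul_nonneg hρ (le_max_right _ _))),
    iSup_sub_shapedInv_eq_min hr hrrho hrhoR hs₀ hkink htau, ← max_zero_min_delay_eq hr hrrho hs₀,
    ENNReal.ofReal_max]
  simp
end
end

section
/- Let α = γ_{b,r} ∧ γ_{L,R'} with 0 ≤ L ≤ b and 0 ≤ r < R' < ∞, and let β = δ_D ⊗ ((δ_τ ⊗ I_σ ⊗ γ_{0,ρ}) ∧ δ_0) with D, τ, σ ≥ 0 and r < ρ ≤ R' < ∞. Suppose θ satisfies θ ≥ D and θ ≥ D + τ − (b−L)/(R'−r), and set Y_b = ((b−L)/(R'−r))·r + b and y = (θ + (b−L)/(R'−r) − (D + τ))·ρ + σ. Then the nondecreasing lower bound of the FIFO leftover satisfies (β ⊖_θ α)↑ = δ_D ⊗ [ ((δ_{θ−D+(b−L)/(R'−r)+[Y_b−y]⁺/(ρ−r)} ⊗ I_{[y−Y_b]⁺} ⊗ γ_{0,ρ−r}) ∧ δ_0) ∧ ((δ_{θ−D} ⊗ I_0 ⊗ γ_{0,+∞}) ∧ δ_0) ], where [x]⁺ = max(x, 0). -/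
open scoped ENNReal
open Classical

noncomputable section

/-! For `u > θ` the leftover is `ofReal` of the real gap `β(u) − α(u − θ)`. Let
`c = θ + (b − L)/(R' − r)` be the time at which `α(· − θ)` leaves its steep branch `L + R'·v`
for the branch `b + r·v`. Before `c`, `α` grows at rate `R' ≥ ρ`, at least as fast as `β`, so the
gap never drops below its value `y − Y_b` at `c`; after `c`, `β` is past its latency (this is
`θ ≥ D + τ − (b − L)/(R' − r)`) and the gap grows at rate `ρ − r`. The nondecreasing lower bound
is therefore `[y − Y_b + (ρ − r)(t − c)⁺]⁺` for `t > θ` and `0` before, and the clamping at `0`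
is what the burst `[y − Y_b]⁺` and the extra latency `[Y_b − y]⁺/(ρ − r)` encode. -/

def mslcCurve (T : ℝ) (σ ρ : ℝ≥0∞) : ℝ → ℝ≥0∞ := fun s =>
  if s ≤ 0 then 0 else if s ≤ T then σ else σ + ρ * ENNReal.ofReal (s - T)

section MinPlus

variable {T : ℝ}

lemma mconv_eq_of_isLeast {f g : ℝ → ℝ≥0∞} {t u₀ : ℝ} {a : ℝ≥0∞} (hu₀ : u₀ ∈ Set.Icc 0 t)
    (hval : f (t - u₀) + g u₀ = a) (hle : ∀ u ∈ Set.Icc 0 t, a ≤ f (t - u) + g u) :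
    mconv f g t = a := by
  rw [mconv, if_neg (hu₀.1.trans hu₀.2).not_gt]
  exact le_antisymm (hval ▸ biInf_le (fun u => f (t - u) + g u) hu₀) (le_iInf₂ hle)

lemma mconv_bdelay_wndw (σ : ℝ≥0∞) :
    mconv (bdelay T) (wndw σ) = fun v => if v < 0 then 0 else if v ≤ T then σ else ⊤ := by
  funext v
  rcases lt_or_ge v 0 with hv | hv
  · simp [mconv, hv]
  have hvalue : bdelay T (v - 0) + wndw σ 0 = if v < 0 then 0 else if v ≤ T then σ else ⊤ := by
    by_cases hvT : v ≤ T <;> simp [bdelay, wndw, hv.not_gt, hvT]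
  refine mconv_eq_of_isLeast ⟨le_rfl, hv⟩ hvalue fun u hu => ?_
  rcases hu.1.eq_or_lt with rfl | hu0
  · exact hvalue.ge
  · simp [wndw, hu0.ne', hu0.not_gt]

lemma mconv_step_tbkt (hT : 0 ≤ T) (σ ρ : ℝ≥0∞) :
    mconv (fun v => if v < 0 then 0 else if v ≤ T then σ else ⊤) (tbkt 0 ρ)
      = fun s => if s < 0 then 0 else if s ≤ T then σ else σ + ρ * ENNReal.ofReal (s - T) := by
  funext s
  rcases lt_or_ge s 0 with hs | hs
  · simp [mconv, hs]
  have htbkt : ∀ u, 0 ≤ u → tbkt 0 ρ u = ρ * ENNReal.ofReal u := fun u hu => by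
    rcases hu.eq_or_lt with rfl | hu0 <;> simp [tbkt, *]
  refine mconv_eq_of_isLeast (u₀ := max 0 (s - T)) ⟨le_max_left _ _, max_le hs (by linarith)⟩
    ?_ fun u hu => ?_
  · rcases le_or_gt s T with hsT | hsT
    · simp [hsT, hs.not_gt, tbkt]
    · rw [max_eq_right (by linarith), htbkt _ (by linarith), sub_sub_cancel]
      simp [hs.not_gt, hsT.not_ge, hT.not_gt]
  · rw [htbkt u hu.1, if_neg hs.not_gt, if_neg (show ¬ s - u < 0 by linarith [hu.2])]
    split_ifs
    · exact le_self_add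
    · simp
    · gcongr
      linarith
    · simp

lemma mslcStep_eq_mslcCurve (hT : 0 ≤ T) (σ ρ : ℝ≥0∞) : mslcStep T σ ρ = mslcCurve T σ ρ := by
  funext s
  simp only [mslcStep, Pi.inf_apply, mconv_bdelay_wndw, mconv_step_tbkt hT, mslcCurve, bdelay]
  rcases lt_trichotomy s 0 with hs | rfl | hs
  · simp [hs, hs.le]
  · simp
  · simp [hs.not_gt, hs.not_ge]

lemma monotone_mslcCurve (T : ℝ) (σ ρ : ℝ≥0∞) : Monotone (mslcCurve T σ ρ) := by
  intro x z hxz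
  simp only [mslcCurve]
  split_ifs
  all_goals first
    | exact zero_le
    | exact le_rfl
    | exact le_self_add
    | (exfalso; linarith)
    | gcongr

lemma mslcCurve_of_nonpos (σ ρ : ℝ≥0∞) {s : ℝ} (hs : s ≤ 0) : mslcCurve T σ ρ s = 0 :=
  if_pos hs

lemma mslcCurve_zero_of_le (ρ : ℝ≥0∞) {s : ℝ} (hs : s ≤ T) : mslcCurve T 0 ρ s = 0 := by
  by_cases hs0 : s ≤ 0 <;> simp [mslcCurve, hs, hs0]

lemma mslcCurve_zero_top_of_lt (hT : 0 ≤ T) {s : ℝ} (hs : T < s) : mslcCurve T 0 ⊤ s = ⊤ := by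
  simp [mslcCurve, (hT.trans_lt hs).not_ge, hs.not_ge]

lemma mslcCurve_ofReal {σ ρ s : ℝ} (hσ : 0 ≤ σ) (hρ : 0 ≤ ρ) (hs : 0 < s) :
    mslcCurve T (ENNReal.ofReal σ) (ENNReal.ofReal ρ) s
      = ENNReal.ofReal (σ + ρ * max (s - T) 0) := by
  rw [mslcCurve, if_neg hs.not_ge]
  split_ifs with hsT
  · simp [hsT]
  · rw [max_eq_left (by linarith), ENNReal.ofReal_add hσ (by nlinarith), ENNReal.ofReal_mul hρ]

lemma mconv_bdelay_apply_of_monotone (hT : 0 ≤ T) {f : ℝ → ℝ≥0∞} (hf : Monotone f)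
    (hf0 : ∀ s ≤ 0, f s = 0) (t : ℝ) : mconv (bdelay T) f t = f (t - T) := by
  rcases lt_or_ge t 0 with ht | ht
  · simp [mconv, ht, hf0 (t - T) (by linarith)]
  refine mconv_eq_of_isLeast (u₀ := max 0 (t - T)) ⟨le_max_left _ _, max_le ht (by linarith)⟩
    ?_ fun u hu => ?_
  · rw [bdelay, if_pos (by linarith [le_max_right 0 (t - T)]), zero_add, hf.map_max, hf0 0 le_rfl,
      zero_max]
  · by_cases htu : t - u ≤ T
    · simpa [bdelay, htu] using hf (by linarith : t - T ≤ u)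
    · simp [bdelay, htu]

end MinPlus

lemma mslcCurve_eq_ofReal_add_mul_max {d p q k s : ℝ} (hk : 0 < k) (hs : 0 < s) :
    mslcCurve (d + max (q - p) 0 / k) (ENNReal.ofReal (max (p - q) 0)) (ENNReal.ofReal k) s
      = ENNReal.ofReal (p - q + k * max (s - d) 0) := by
  rcases le_total q p with hqp | hpq
  · rw [max_eq_right (sub_nonpos.2 hqp), zero_div, add_zero, max_eq_left (sub_nonneg.2 hqp)]
    exact mslcCurve_ofReal (sub_nonneg.2 hqp) hk.le hs
  have hdiv : k * ((q - p) / k) = q - p := mul_div_cancel₀ _ hk.ne'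
  rw [max_eq_left (sub_nonneg.2 hpq), max_eq_right (sub_nonpos.2 hpq), ENNReal.ofReal_zero,
    mslcCurve, if_neg hs.not_ge]
  split_ifs with hsd
  · refine (ENNReal.ofReal_of_nonpos ?_).symm
    have : k * (s - d) ≤ k * ((q - p) / k) := by gcongr; linarith
    rcases le_total (s - d) 0 with h | h
    · rw [max_eq_right h]; linarith
    · rw [max_eq_left h]; linarith
  · have hpos : 0 ≤ (q - p) / k := div_nonneg (sub_nonneg.2 hpq) hk.le
    rw [zero_add, ← ENNReal.ofReal_mul hk.le, max_eq_left (by linarith)]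
    congr 1
    linarith [mul_sub k (s - d) ((q - p) / k)]

lemma tbkt_ofReal {b r v : ℝ} (hb : 0 ≤ b) (hr : 0 ≤ r) (hv : 0 < v) :
    tbkt (ENNReal.ofReal b) (ENNReal.ofReal r) v = ENNReal.ofReal (b + r * v) := by
  rw [tbkt, if_neg hv.not_ge, ENNReal.ofReal_add hb (by positivity), ENNReal.ofReal_mul hr]

def leftoverReal (L b r R' D tau sig rho θ : ℝ) (u : ℝ) : ℝ :=
  sig + rho * max (u - D - tau) 0 - min (b + r * (u - θ)) (L + R' * (u - θ))

section LeftoverReal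

variable {L b r R' D tau sig rho θ T : ℝ}

lemma leftover_eq_ofReal_leftoverReal (hL : 0 ≤ L) (hb : 0 ≤ b) (hr : 0 ≤ r) (hR' : 0 ≤ R')
    (hD : 0 ≤ D) (htau : 0 ≤ tau) (hsig : 0 ≤ sig) (hrho : 0 ≤ rho) (hθ : D ≤ θ) {u : ℝ}
    (hu : θ < u) :
    leftover (mconv (bdelay D) (mslcStep tau (ENNReal.ofReal sig) (ENNReal.ofReal rho)))
        (tbkt (ENNReal.ofReal b) (ENNReal.ofReal r) ⊓ tbkt (ENNReal.ofReal L) (ENNReal.ofReal R'))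
        θ u
      = ENNReal.ofReal (leftoverReal L b r R' D tau sig rho θ u) := by
  have hv : 0 < u - θ := sub_pos.2 hu
  rw [leftover, if_neg hu.not_ge, mslcStep_eq_mslcCurve htau,
    mconv_bdelay_apply_of_monotone hD (monotone_mslcCurve _ _ _)
      fun s hs => mslcCurve_of_nonpos _ _ hs,
    mslcCurve_ofReal hsig hrho (by linarith), Pi.inf_apply, tbkt_ofReal hb hr hv,
    tbkt_ofReal hL hR' hv, ← ENNReal.ofReal_min, leftoverReal,
    ENNReal.ofReal_sub _ (le_min (by positivity) (by positivity))]

lemma min_add_mul_eq_right_of_le (hT : b - L = (R' - r) * T) (hrR : r ≤ R') {v : ℝ} (hv : v ≤ T) :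
    min (b + r * v) (L + R' * v) = L + R' * v :=
  min_eq_right (by nlinarith)

lemma min_add_mul_eq_left_of_ge (hT : b - L = (R' - r) * T) (hrR : r ≤ R') {v : ℝ} (hv : T ≤ v) :
    min (b + r * v) (L + R' * v) = b + r * v :=
  min_eq_left (by nlinarith)

lemma leftoverReal_self_add (hT : b - L = (R' - r) * T) (hrR : r ≤ R') (hc : D + tau ≤ θ + T) :
    leftoverReal L b r R' D tau sig rho θ (θ + T)
      = (θ + T - (D + tau)) * rho + sig - (T * r + b) := by
  rw [leftoverReal, add_sub_cancel_left, min_add_mul_eq_left_of_ge hT hrR le_rfl,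
    max_eq_left (by linarith)]
  ring

lemma leftoverReal_of_ge (hT : b - L = (R' - r) * T) (hrR : r ≤ R') (hc : D + tau ≤ θ + T)
    {u : ℝ} (hu : θ + T ≤ u) :
    leftoverReal L b r R' D tau sig rho θ u
      = leftoverReal L b r R' D tau sig rho θ (θ + T) + (rho - r) * (u - (θ + T)) := by
  rw [leftoverReal, leftoverReal, add_sub_cancel_left, min_add_mul_eq_left_of_ge hT hrR le_rfl,
    min_add_mul_eq_left_of_ge hT hrR (by linarith), max_eq_left (by linarith),
    max_eq_left (by linarith)]
  ring

lemma leftoverReal_self_add_le (hT : b - L = (R' - r) * T) (hrR : r ≤ R') (hrho : 0 ≤ rho)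
    (hrhoR : rho ≤ R') (hc : D + tau ≤ θ + T) {u : ℝ} (hu : u ≤ θ + T) :
    leftoverReal L b r R' D tau sig rho θ (θ + T) ≤ leftoverReal L b r R' D tau sig rho θ u := by
  rw [leftoverReal, leftoverReal, add_sub_cancel_left, min_add_mul_eq_right_of_le hT hrR le_rfl,
    min_add_mul_eq_right_of_le hT hrR (by linarith), max_eq_left (by linarith)]
  nlinarith [le_max_left (u - D - tau) 0]

end LeftoverReal

lemma ndlb_leftover_of_le (β α : ℝ → ℝ≥0∞) {θ t : ℝ} (ht : t ≤ θ) :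
    ndlb (leftover β α θ) t = 0 :=
  le_antisymm ((biInf_le _ (show θ ∈ Set.Ici t from ht)).trans (by simp [leftover])) bot_le

lemma ndlb_eq_ofReal_add_mul_max {f : ℝ → ℝ≥0∞} {g : ℝ → ℝ} {a c k t : ℝ}
    (hfg : ∀ u, a < u → f u = ENNReal.ofReal (g u)) (hle : ∀ u, a < u → u ≤ c → g c ≤ g u)
    (hlin : ∀ u, c ≤ u → g u = g c + k * (u - c)) (hk : 0 ≤ k) (ht : a < t) :
    ndlb f t = ENNReal.ofReal (g c + k * max (t - c) 0) := by
  have hmax : g (max t c) = g c + k * max (t - c) 0 := by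
    rw [hlin _ (le_max_right t c), ← max_sub_sub_right, sub_self]
  refine le_antisymm ?_ (le_iInf₂ fun u (hu : t ≤ u) => ?_)
  · rw [← hmax, ← hfg _ (ht.trans_le (le_max_left t c))]
    exact biInf_le _ (show max t c ∈ Set.Ici t from le_max_left t c)
  rw [hfg u (ht.trans_le hu)]
  refine ENNReal.ofReal_le_ofReal ?_
  rcases le_or_gt u c with huc | hcu
  · rw [max_eq_right (by linarith), mul_zero, add_zero]
    exact hle u (ht.trans_le hu) huc
  · rw [hlin u hcu.le]
    gcongr
    exact max_le (by linarith) (by linarith)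

/-- symbolic nondecreasing lower bound of the FIFO leftover, case
`θ ≥ D` and `θ ≥ D + τ − (b−L)/(R'−r)`, with `Y_b = ((b−L)/(R'−r))·r + b` and
`y = (θ + (b−L)/(R'−r) − (D+τ))·ρ + σ`. -/
theorem stmt16 (L b r R' D tau sig rho θ : ℝ)
    (hL : 0 ≤ L) (hLb : L ≤ b) (hr : 0 ≤ r) (hrR : r < R')
    (hD : 0 ≤ D) (htau : 0 ≤ tau) (hsig : 0 ≤ sig) (hrrho : r < rho) (hrhoR : rho ≤ R')
    (hθ1 : D ≤ θ) (hθ2 : D + tau - (b - L) / (R' - r) ≤ θ) :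
    ndlb (leftover
            (mconv (bdelay D) (mslcStep tau (ENNReal.ofReal sig) (ENNReal.ofReal rho)))
            (tbkt (ENNReal.ofReal b) (ENNReal.ofReal r)
              ⊓ tbkt (ENNReal.ofReal L) (ENNReal.ofReal R'))
            θ)
      = mconv (bdelay D)
          (mslcStep
              (θ - D + (b - L) / (R' - r)
                + max ((b - L) / (R' - r) * r + b
                    - ((θ + (b - L) / (R' - r) - (D + tau)) * rho + sig)) 0 / (rho - r))
              (ENNReal.ofReal (max ((θ + (b - L) / (R' - r) - (D + tau)) * rho + sig
                  - ((b - L) / (R' - r) * r + b)) 0))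
              (ENNReal.ofReal (rho - r))
            ⊓ mslcStep (θ - D) 0 ⊤) := by
  have hRr : 0 < R' - r := by linarith
  have hk : 0 < rho - r := by linarith
  set T := (b - L) / (R' - r)
  have hT : b - L = (R' - r) * T := (mul_div_cancel₀ _ hRr.ne').symm
  have hc : D + tau ≤ θ + T := by linarith
  rw [mslcStep_eq_mslcCurve (add_nonneg (by linarith) (div_nonneg (le_max_right _ _) hk.le)),
    mslcStep_eq_mslcCurve (T := θ - D) (by linarith)]
  funext t
  rw [mconv_bdelay_apply_of_monotone hD ((monotone_mslcCurve _ _ _).inf (monotone_mslcCurve _ _ _))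
    (fun s hs => by simp [mslcCurve_of_nonpos _ _ hs]), Pi.inf_apply]
  rcases le_or_gt t θ with ht | ht
  · rw [ndlb_leftover_of_le _ _ ht, mslcCurve_zero_of_le _ (by linarith), min_zero]
  rw [ndlb_eq_ofReal_add_mul_max
      (fun u hu => leftover_eq_ofReal_leftoverReal hL (hL.trans hLb) hr (hr.trans hrR.le) hD htau
        hsig (hr.trans hrrho.le) hθ1 hu)
      (fun u _ hu => leftoverReal_self_add_le hT hrR.le (hr.trans hrrho.le) hrhoR hc hu)
      (fun u hu => leftoverReal_of_ge hT hrR.le hc hu) hk.le ht,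
    leftoverReal_self_add hT hrR.le hc, mslcCurve_zero_top_of_lt (by linarith) (by linarith),
    inf_top_eq, mslcCurve_eq_ofReal_add_mul_max hk (by linarith),
    show t - D - (θ - D + T) = t - (θ + T) by ring]
end
end
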